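/- arXiv:1305.4945 — 3 statements merged into one kernel-verified Lean document; each statement's English description precedes it below -/
import Mathlib

section
/- With 𝔇 = 𝔉 ⊕ 𝔉d as above, the k-linear map t : 𝔇 → 𝔇^op sending f ∈ 𝔉 to the function z ↦ f(−z) and d to s·d, where s ∈ 𝔉 is the function s(z) = (−1)^z, is a k-algebra isomorphism from 𝔇 to its opposite algebra. -/
/-- The shift map on the algebra of `k`-valued functions on `ℤ`. -/
def sh {k : Type*} [Field k] (f : ℤ → k) : ℤ → k := fun z => f (z + 1)

/-- Multiplication on `𝔇 = 𝔉 ⊕ 𝔉d`, elements `f + f'·d` encoded as pairs `(f, f')`. -/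
def Dmul {k : Type*} [Field k] (x y : (ℤ → k) × (ℤ → k)) : (ℤ → k) × (ℤ → k) :=
  (x.1 * y.1, x.1 * y.2 + x.2 * sh y.1)

/-- The sign function `s ∈ 𝔉`, `s(z) = (-1)^z`. -/
def sgn (k : Type*) [Field k] : ℤ → k := fun z => (-1 : k) ^ z

/-- The map `t : 𝔇 → 𝔇` sending `f ∈ 𝔉` to `z ↦ f(-z)` and `d` to `s·d`; on a general
element `f + f'·d` it is given by `t(f + f'd) = (z ↦ f(-z)) + (z ↦ (-1)^z f'(-z-1))·d`. -/
def tmap {k : Type*} [Field k] (x : (ℤ → k) × (ℤ → k)) : (ℤ → k) × (ℤ → k) :=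
  (fun z => x.1 (-z), fun z => (-1 : k) ^ z * x.2 (-z - 1))

/-! Proof idea: `t ∘ t` is the involution `(f, f') ↦ (f, -f')`, because `s(z) s(-z-1) = -1`;
hence `t` is bijective. Anti-multiplicativity is a pointwise computation, the one input being
that the reflection `z ↦ -z` conjugates the shift into its inverse:
`sh (z ↦ f (-z)) = (z ↦ f (-z - 1))`. -/

section
variable {k : Type*} [Field k]

lemma tmap_tmap (x : (ℤ → k) × (ℤ → k)) : tmap (tmap x) = (x.1, -x.2) := by
  ext z
  · simp [tmap]
  · have hz : -(-z - 1) - 1 = z := by ring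
    have hsign : (-1 : k) ^ z * (-1 : k) ^ (-z - 1) = -1 := by
      rw [← zpow_add₀ (neg_ne_zero.mpr one_ne_zero), show z + (-z - 1) = -1 by ring]
      simp
    simp only [tmap, hz, Pi.neg_apply, ← mul_assoc, hsign, neg_one_mul]

lemma tmap_bijective : Function.Bijective (tmap : (ℤ → k) × (ℤ → k) → (ℤ → k) × (ℤ → k)) := by
  have hinv : Function.Involutive (fun x : (ℤ → k) × (ℤ → k) => (x.1, -x.2)) := fun x => by simp
  have hcomp : tmap ∘ tmap = fun x : (ℤ → k) × (ℤ → k) => (x.1, -x.2) := funext tmap_tmap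
  exact ⟨.of_comp (f := tmap) (hcomp ▸ hinv.injective),
    .of_comp (g := tmap) (hcomp ▸ hinv.surjective)⟩

lemma tmap_add (x y : (ℤ → k) × (ℤ → k)) : tmap (x + y) = tmap x + tmap y := by
  ext z <;> simp [tmap, mul_add]

lemma tmap_smul (c : k) (x : (ℤ → k) × (ℤ → k)) : tmap (c • x) = c • tmap x := by
  ext z <;> simp [tmap, mul_left_comm]

lemma tmap_one : tmap ((1 : ℤ → k), (0 : ℤ → k)) = (1, 0) := by
  ext z <;> simp [tmap]

lemma tmap_d : tmap ((0 : ℤ → k), (1 : ℤ → k)) = (0, sgn k) := by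
  ext z <;> simp [tmap, sgn]

lemma sh_comp_neg (f : ℤ → k) : sh (fun z => f (-z)) = fun z => f (-z - 1) := by
  ext z
  simp only [sh, neg_add, sub_eq_add_neg]

lemma tmap_Dmul (x y : (ℤ → k) × (ℤ → k)) : tmap (Dmul x y) = Dmul (tmap y) (tmap x) := by
  ext z
  · simp only [tmap, Dmul, Pi.mul_apply, mul_comm]
  · simp only [tmap, Dmul, sh_comp_neg, Pi.mul_apply, Pi.add_apply, sh, sub_add_cancel]
    ring

end

/-- `t` is a `k`-algebra isomorphism from `𝔇` onto its opposite algebra: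
it is bijective, `k`-linear, unital, sends `d = (0,1)` to `s·d = (0,s)`, and
anti-multiplicative: `t(x·y) = t(y)·t(x)`. -/
theorem t_is_isomorphism_to_opposite (k : Type*) [Field k] :
    Function.Bijective (tmap : (ℤ → k) × (ℤ → k) → (ℤ → k) × (ℤ → k)) ∧
    (∀ x y : (ℤ → k) × (ℤ → k), tmap (x + y) = tmap x + tmap y) ∧
    (∀ (c : k) (x : (ℤ → k) × (ℤ → k)), tmap (c • x) = c • tmap x) ∧
    tmap ((1 : ℤ → k), (0 : ℤ → k)) = ((1 : ℤ → k), (0 : ℤ → k)) ∧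
    tmap ((0 : ℤ → k), (1 : ℤ → k)) = ((0 : ℤ → k), sgn k) ∧
    (∀ x y : (ℤ → k) × (ℤ → k), tmap (Dmul x y) = Dmul (tmap y) (tmap x)) := by
  exact ⟨tmap_bijective, tmap_add, tmap_smul, tmap_one, tmap_d, tmap_Dmul⟩
end

section
/- Let k be an algebraically closed field, and let A and B be finite-dimensional k-algebras with e ∈ A and f ∈ B primitive idempotents. Then e ⊗ f is a primitive idempotent of A ⊗_k B. -/
/-!
If `e` is a primitive idempotent of a finite-dimensional algebra, every element of the corner
`eAe` is nilpotent or invertible in `eAe`: factor its minimal polynomial as `X ^ m * q` with `q`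
prime to `X`; the idempotent of `eAe` cut out by this factorisation is `0` or `e` by
primitivity. Over an algebraically closed field, subtracting an eigenvalue of left
multiplication then shows `eAe = k e + N`, where the nilpotent elements `N` form an ideal of
`eAe`, which is nilpotent because it is finite-dimensional and nil.

For `E = e ⊗ f` the corner `E (A ⊗ B) E` is spanned by `E` together with
`(N_A + N_B) (eAe ⊗ fBf)`; as `N_A` and `N_B` commute with each other and are normalised by the
corners, this is again a nilpotent subspace. So an idempotent of the corner of `E` is a scalar
multiple of `E` plus a nilpotent, and such an idempotent is `0` or `E`.
-/

/-- An idempotent `e` of a ring is primitive if it is nonzero and cannot be written as a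
sum of two nonzero orthogonal idempotents. -/
def IsPrimitiveIdem {R : Type*} [Ring R] (e : R) : Prop :=
  IsIdempotentElem e ∧ e ≠ 0 ∧
    ∀ a b : R, IsIdempotentElem a → IsIdempotentElem b → a * b = 0 → b * a = 0 →
      e = a + b → a = 0 ∨ b = 0

open Polynomial

section Ring

variable {R : Type*} [Ring R] {e : R}

theorem isPrimitiveIdem_iff : IsPrimitiveIdem e ↔ IsIdempotentElem e ∧ e ≠ 0 ∧
    ∀ c : R, IsIdempotentElem c → e * c = c → c * e = c → c = 0 ∨ c = e := by
  refine and_congr_right fun he => and_congr_right fun _ => ⟨fun h c hc hec hce => ?_, ?_⟩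
  · have hc₁ : c * (e - c) = 0 := by rw [mul_sub, hce, hc.eq, sub_self]
    have hc₂ : (e - c) * c = 0 := by rw [sub_mul, hec, hc.eq, sub_self]
    rcases h c (e - c) hc (hc.sub he hce hec) hc₁ hc₂ (add_sub_cancel c e).symm with h0 | h0
    · exact .inl h0
    · exact .inr (sub_eq_zero.1 h0).symm
  · intro h a b ha hb hab hba hsum
    rcases h a ha (by rw [hsum, add_mul, ha.eq, hba, add_zero])
      (by rw [hsum, mul_add, ha.eq, hab, add_zero]) with h0 | h0
    · exact .inl h0
    · rw [h0, left_eq_add] at hsum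
      exact .inr hsum

theorem eq_zero_of_mul_eq_of_isNilpotent {w n : R} (hn : IsNilpotent n) (hen : e * n = n)
    (hwn : w * n = e) : e = 0 := by
  obtain ⟨m, hm⟩ := hn
  have key : ∀ j : ℕ, w ^ (j + 1) * n ^ (j + 1) = e := by
    intro j
    induction j with
    | zero => simpa using hwn
    | succ j ih =>
      have hen' : e * n ^ (j + 1) = n ^ (j + 1) := by rw [pow_succ', ← mul_assoc, hen]
      rw [pow_succ, pow_succ' n, mul_assoc, ← mul_assoc w, hwn, hen', ih]
  rw [← key m, pow_succ n, hm, zero_mul, mul_zero]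

end Ring

section Algebra

variable {k R : Type*} [Field k] [Ring R] [Algebra k R] {e : R}

variable (k) in
theorem IsPrimitiveIdem.isNilpotent_or_exists_mul_eq [Algebra.IsIntegral k R]
    (he : IsPrimitiveIdem e) {x : R} (hex : e * x = x) (hxe : x * e = x) :
    IsNilpotent x ∨ ∃ w, e * w = w ∧ w * x = e := by
  obtain ⟨q, hpq, hq⟩ := exists_eq_pow_rootMultiplicity_mul_and_not_dvd (minpoly k x)
    (minpoly.ne_zero (Algebra.IsIntegral.isIntegral x)) 0
  set m := rootMultiplicity 0 (minpoly k x)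
  simp only [map_zero, sub_zero] at hpq hq
  obtain ⟨u, v, huv⟩ : IsCoprime (X ^ (m + 1)) q :=
    (irreducible_X.coprime_iff_not_dvd.2 hq).pow_left
  have hcomm (p : k[X]) : Commute e (aeval x p) :=
    Algebra.commute_of_mem_adjoin_singleton_of_commute (aeval_mem_adjoin_singleton k x)
      (hex.trans hxe.symm)
  have hkill : aeval x (X ^ (m + 1) * q) = 0 := by
    rw [pow_succ', mul_assoc, ← hpq, map_mul, minpoly.aeval, mul_zero]
  set α := aeval x (u * X ^ (m + 1))
  set β := aeval x (v * q)
  have hαβ : α + β = 1 := by rw [← map_add, huv, map_one]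
  have hαβ0 : α * β = 0 := by
    rw [← map_mul, show u * X ^ (m + 1) * (v * q) = u * v * (X ^ (m + 1) * q) by ring,
      map_mul, hkill, mul_zero]
  have hαe : IsIdempotentElem (α * e) := by
    have hαα : α * α = α := by simpa [mul_add, hαβ0] using congrArg (α * ·) hαβ
    rw [IsIdempotentElem, mul_assoc, ← mul_assoc e, (hcomm _).eq, mul_assoc, he.1.eq,
      ← mul_assoc, hαα]
  rcases (isPrimitiveIdem_iff.1 he).2.2 (α * e) hαe
    (by rw [← mul_assoc, (hcomm _).eq, mul_assoc, he.1.eq])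
    (by rw [mul_assoc, he.1.eq]) with h0 | h1
  · refine .inl ⟨m + 1, ?_⟩
    have hxm : x ^ (m + 1) * e = x ^ (m + 1) := by rw [pow_succ, mul_assoc, hxe]
    have hxβ : x ^ (m + 1) * β = 0 := by
      rw [← aeval_X_pow (R := k), ← map_mul,
        show X ^ (m + 1) * (v * q) = v * (X ^ (m + 1) * q) by ring, map_mul, hkill, mul_zero]
    calc x ^ (m + 1) = x ^ (m + 1) * ((α + β) * e) := by rw [hαβ, one_mul, hxm]
      _ = 0 := by rw [add_mul, mul_add, h0, ← mul_assoc, hxβ, mul_zero, zero_mul, add_zero]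
  · refine .inr ⟨e * aeval x (u * X ^ m) * e, by simp only [← mul_assoc, he.1.eq], ?_⟩
    calc e * aeval x (u * X ^ m) * e * x = e * aeval x (u * X ^ m * X) := by
          rw [mul_assoc _ e, hex, mul_assoc, map_mul _ _ X, aeval_X]
      _ = e := by rw [mul_assoc, ← pow_succ, (hcomm _).eq, h1]

end Algebra

namespace Submodule

variable {k R : Type*} [CommRing k] [Ring R] [Algebra k R] [IsArtinian k R]

theorem eq_bot_of_mul_self_eq_of_forall_isNilpotent {M : Submodule k R} (hM : M * M = M)
    (hnil : ∀ x ∈ M, IsNilpotent x) : M = ⊥ := by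
  by_contra hM₀
  obtain ⟨L, ⟨hML, hL₀⟩, hmin⟩ :=
    IsArtinian.set_has_minimal {L : Submodule k R | M * L = L ∧ L ≠ ⊥} ⟨M, hM, hM₀⟩
  obtain ⟨a, haL, ha⟩ : ∃ a ∈ L, M * span k {a} ≠ ⊥ := by
    by_contra! h
    refine hL₀ (eq_bot_iff.2 (hML ▸ mul_le.2 fun m hm l hl => ?_))
    exact h l hl ▸ mul_mem_mul hm (mem_span_singleton_self l)
  have hsub : M * span k {a} ≤ L :=
    hML ▸ mul_le_mul_right (span_le.2 (Set.singleton_subset_iff.2 haL)) M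
  have heq : M * span k {a} = L := by
    refine hsub.eq_of_not_lt fun hlt => hmin _ ⟨?_, ha⟩ hlt
    rw [← mul_assoc, hM]
  obtain ⟨z, hz, hza⟩ := mem_mul_span_singleton.1 (heq ▸ haL : a ∈ M * span k {a})
  obtain ⟨r, hr⟩ := hnil z hz
  have hpow : ∀ i : ℕ, z ^ i * a = a := fun i => by
    induction i with
    | zero => rw [pow_zero, one_mul]
    | succ i ih => rw [pow_succ, mul_assoc, hza, ih]
  refine ha ?_
  rw [← hpow r, hr, zero_mul, span_singleton_eq_bot.2 rfl, mul_bot]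

theorem isNilpotent_of_mul_self_le_of_forall_isNilpotent {N : Submodule k R} (hN : N * N ≤ N)
    (hnil : ∀ x ∈ N, IsNilpotent x) : IsNilpotent N := by
  have hanti : Antitone fun n : ℕ => N ^ (n + 1) := antitone_nat_of_succ_le fun n => by
    rw [pow_succ, pow_succ, mul_assoc]
    exact mul_le_mul_right hN _
  obtain ⟨n, hn⟩ :=
    IsArtinian.monotone_stabilizes ⟨fun n => OrderDual.toDual (N ^ (n + 1)), hanti⟩
  refine ⟨n + 1, eq_bot_of_mul_self_eq_of_forall_isNilpotent ?_ fun x hx => hnil x ?_⟩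
  · rw [← pow_add]
    exact (hn (n + 1 + n) (by omega)).symm
  · simpa using hanti (Nat.zero_le n) hx

end Submodule

theorem isNilpotent_mul_of_mul_le {α : Type*} [IdemSemiring α] {P D : α} (hP : IsNilpotent P)
    (h : D * P ≤ P * D) : IsNilpotent (P * D) := by
  have hDP (n : ℕ) : D * P ^ n ≤ P ^ n * D := by
    induction n with
    | zero => rw [pow_zero, mul_one, one_mul]
    | succ n ih =>
      calc D * P ^ (n + 1) = D * P ^ n * P := by rw [pow_succ, mul_assoc]
        _ ≤ P ^ n * D * P := mul_le_mul_left ih P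
        _ ≤ P ^ n * (P * D) := by rw [mul_assoc]; exact mul_le_mul_right h _
        _ = P ^ (n + 1) * D := by rw [pow_succ, mul_assoc]
  have hpow (n : ℕ) : (P * D) ^ n ≤ P ^ n * D ^ n := by
    induction n with
    | zero => rw [pow_zero, pow_zero, pow_zero, mul_one]
    | succ n ih =>
      calc (P * D) ^ (n + 1) ≤ P * D * (P ^ n * D ^ n) := by
            rw [pow_succ']; exact mul_le_mul_right ih _
        _ = P * (D * P ^ n) * D ^ n := by simp only [mul_assoc]
        _ ≤ P * (P ^ n * D) * D ^ n := mul_le_mul_left (mul_le_mul_right (hDP n) P) _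
        _ = P ^ (n + 1) * D ^ (n + 1) := by simp only [pow_succ', mul_assoc]
  obtain ⟨n, hn⟩ := hP
  exact ⟨n, le_antisymm ((hpow n).trans_eq (by rw [hn, zero_mul])) zero_le⟩

theorem TensorProduct.tmul_ne_zero {k V W : Type*} [Field k] [AddCommGroup V] [Module k V]
    [AddCommGroup W] [Module k W] {v : V} {w : W} (hv : v ≠ 0) (hw : w ≠ 0) :
    v ⊗ₜ[k] w ≠ 0 := by
  obtain ⟨φ, hφ⟩ : ∃ φ : Module.Dual k V, φ v ≠ 0 := by
    simpa using mt (Module.forall_dual_apply_eq_zero_iff k v).1 hv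
  obtain ⟨ψ, hψ⟩ : ∃ ψ : Module.Dual k W, ψ w ≠ 0 := by
    simpa using mt (Module.forall_dual_apply_eq_zero_iff k w).1 hw
  intro h
  have := congrArg (TensorProduct.lid k k ∘ TensorProduct.map φ ψ) h
  simp [hφ, hψ] at this

section Corner

variable {k R : Type*} [Field k] [Ring R] [Algebra k R] {e : R}

variable (k) in
def cornerSubmodule (e : R) : Submodule k R where
  carrier := {x | e * x = x ∧ x * e = x}
  add_mem' := fun ⟨ha₁, ha₂⟩ ⟨hb₁, hb₂⟩ =>
    ⟨by rw [mul_add, ha₁, hb₁], by rw [add_mul, ha₂, hb₂]⟩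
  zero_mem' := ⟨mul_zero e, zero_mul e⟩
  smul_mem' c _ := fun ⟨h₁, h₂⟩ =>
    ⟨by rw [mul_smul_comm, h₁], by rw [smul_mul_assoc, h₂]⟩

theorem IsIdempotentElem.mem_cornerSubmodule (he : IsIdempotentElem e) :
    e ∈ cornerSubmodule k e :=
  ⟨he.eq, he.eq⟩

variable (k) in
/-- `e` is absolutely primitive when `eRe` is a local ring with residue field `k`: every
element of the corner is a scalar multiple of `e` up to a nilpotent. -/
def IsAbsolutelyPrimitiveIdem (e : R) : Prop :=
  IsIdempotentElem e ∧ e ≠ 0 ∧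
    ∀ x ∈ cornerSubmodule k e, ∃ l : k, IsNilpotent (x - l • e)

theorem IsAbsolutelyPrimitiveIdem.isPrimitiveIdem (he : IsAbsolutelyPrimitiveIdem k e) :
    IsPrimitiveIdem e := by
  refine isPrimitiveIdem_iff.2 ⟨he.1, he.2.1, fun c hc hec hce => ?_⟩
  obtain ⟨l, hl⟩ := he.2.2 c ⟨hec, hce⟩
  have hcomm : Commute c (c - l • e) := by
    simp only [Commute, SemiconjBy, mul_sub, sub_mul, mul_smul_comm, smul_mul_assoc, hec, hce]
  by_cases hl₁ : l = 1
  · subst hl₁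
    refine .inr (sub_eq_zero.1 ((hc.sub he.1 hce hec).eq_zero_of_isNilpotent ?_)).symm
    simpa [neg_sub] using hl.neg
  · have hmul : c * (c - l • e) = (1 - l) • c := by
      rw [mul_sub, hc.eq, mul_smul_comm, hce, sub_smul, one_smul]
    have hnil : IsNilpotent ((1 - l) • c) := hmul ▸ hcomm.isNilpotent_mul_left hl
    refine .inl (hc.eq_zero_of_isNilpotent ?_)
    simpa [smul_smul, inv_mul_cancel₀ (sub_ne_zero.2 (Ne.symm hl₁))] using
      hnil.smul (1 - l)⁻¹

theorem IsPrimitiveIdem.isAbsolutelyPrimitiveIdem [IsAlgClosed k] [FiniteDimensional k R]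
    (he : IsPrimitiveIdem e) : IsAbsolutelyPrimitiveIdem k e := by
  refine ⟨he.1, he.2.1, fun x ⟨hex, hxe⟩ => ?_⟩
  have : Nontrivial (cornerSubmodule k e) :=
    ⟨⟨⟨e, he.1.mem_cornerSubmodule⟩, 0, fun h => he.2.1 (congrArg Subtype.val h)⟩⟩
  let L : Module.End k (cornerSubmodule k e) := (LinearMap.mulLeft k x).restrict
    fun v hv => ⟨by rw [LinearMap.mulLeft_apply, ← mul_assoc, hex], by
      rw [LinearMap.mulLeft_apply, mul_assoc, hv.2]⟩
  obtain ⟨l, hl⟩ := L.exists_eigenvalue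
  obtain ⟨v, hv⟩ := hl.exists_hasEigenvector
  have hxv : x * v = l • (v : R) := congrArg Subtype.val hv.apply_eq_smul
  refine ⟨l, (he.isNilpotent_or_exists_mul_eq k ?_ ?_).resolve_right ?_⟩
  · rw [mul_sub, hex, mul_smul_comm, he.1.eq]
  · rw [sub_mul, hxe, smul_mul_assoc, he.1.eq]
  · rintro ⟨w, -, hw⟩
    refine hv.2 (Subtype.ext ?_)
    calc (v : R) = w * (x - l • e) * v := by rw [hw, v.2.1]
      _ = 0 := by rw [mul_assoc, sub_mul, hxv, smul_mul_assoc, v.2.1, sub_self, mul_zero]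

section Nil

variable [Algebra.IsIntegral k R]

variable (k) in
theorem IsPrimitiveIdem.isNilpotent_mul (he : IsPrimitiveIdem e) {c n : R} (hec : e * c = c)
    (hn : n ∈ cornerSubmodule k e) (hnil : IsNilpotent n) : IsNilpotent (c * n) := by
  refine (he.isNilpotent_or_exists_mul_eq k (by rw [← mul_assoc, hec])
    (by rw [mul_assoc, hn.2])).resolve_right ?_
  rintro ⟨w, -, hw⟩
  exact he.2.1 (eq_zero_of_mul_eq_of_isNilpotent hnil hn.1 (by rwa [← mul_assoc] at hw))

variable (k) in
theorem IsPrimitiveIdem.isNilpotent_add (he : IsPrimitiveIdem e) {n n' : R}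
    (hn : n ∈ cornerSubmodule k e) (hn' : n' ∈ cornerSubmodule k e)
    (hnil : IsNilpotent n) (hnil' : IsNilpotent n') : IsNilpotent (n + n') := by
  refine (he.isNilpotent_or_exists_mul_eq k ((cornerSubmodule k e).add_mem hn hn').1
    ((cornerSubmodule k e).add_mem hn hn').2).resolve_right ?_
  rintro ⟨w, hew, hw⟩
  -- `e = w * n + w * n'` would be a sum of two commuting nilpotents
  have hcomm : Commute (w * n) (w * n') := by
    have hwn : Commute (w * n) e := by rw [Commute, SemiconjBy, mul_assoc, hn.2, ← mul_assoc, hew]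
    rw [show w * n' = e - w * n by rw [← hw, mul_add, add_sub_cancel_left]]
    exact hwn.sub_right (Commute.refl _)
  refine he.2.1 (he.1.eq_zero_of_isNilpotent ?_)
  rw [← hw, mul_add]
  exact hcomm.isNilpotent_add (he.isNilpotent_mul k hew hn hnil)
    (he.isNilpotent_mul k hew hn' hnil')

variable (k) in
def IsPrimitiveIdem.nilCorner (he : IsPrimitiveIdem e) : Submodule k R where
  carrier := {x | x ∈ cornerSubmodule k e ∧ IsNilpotent x}
  add_mem' := fun ⟨ha, ha'⟩ ⟨hb, hb'⟩ =>
    ⟨(cornerSubmodule k e).add_mem ha hb, he.isNilpotent_add k ha hb ha' hb'⟩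
  zero_mem' := ⟨(cornerSubmodule k e).zero_mem, .zero⟩
  smul_mem' c _ := fun ⟨h, h'⟩ => ⟨(cornerSubmodule k e).smul_mem c h, h'.smul c⟩

theorem IsPrimitiveIdem.nilCorner_mul_self_le (he : IsPrimitiveIdem e) :
    he.nilCorner k * he.nilCorner k ≤ he.nilCorner k := by
  refine Submodule.mul_le.2 fun n ⟨hn, _⟩ n' ⟨hn', hnil'⟩ =>
    ⟨⟨?_, ?_⟩, he.isNilpotent_mul k hn.1 hn' hnil'⟩
  · rw [← mul_assoc, hn.1]
  · rw [mul_assoc, hn'.2]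

theorem IsPrimitiveIdem.cornerSubmodule_mul_nilCorner_le (he : IsPrimitiveIdem e) :
    cornerSubmodule k e * he.nilCorner k ≤ he.nilCorner k * cornerSubmodule k e := by
  refine Submodule.mul_le.2 fun c hc n ⟨hn, hnil⟩ => ?_
  rw [← hn.2, ← mul_assoc]
  refine Submodule.mul_mem_mul ⟨?_, he.isNilpotent_mul k hc.1 hn hnil⟩ he.1.mem_cornerSubmodule
  exact ⟨by rw [← mul_assoc, hc.1], by rw [mul_assoc, hn.2]⟩

end Nil

end Corner

theorem IsPrimitiveIdem.isNilpotent_nilCorner {k R : Type*} [Field k] [Ring R] [Algebra k R]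
    [FiniteDimensional k R] {e : R} (he : IsPrimitiveIdem e) : IsNilpotent (he.nilCorner k) :=
  Submodule.isNilpotent_of_mul_self_le_of_forall_isNilpotent he.nilCorner_mul_self_le
    fun _ hx => hx.2

section TensorProduct

open TensorProduct Algebra.TensorProduct Submodule

variable {k A B : Type*} [Field k] [Ring A] [Algebra k A] [Ring B] [Algebra k B]

theorem commute_mapHom_includeLeft_mapHom_includeRight (M : Submodule k A)
    (N : Submodule k B) :
    Commute (mapHom (includeLeft : A →ₐ[k] A ⊗[k] B) M) (mapHom includeRight N) :=
  mul_comm_of_commute <| by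
    rintro _ ⟨a, -, rfl⟩ _ ⟨b, -, rfl⟩
    exact (Commute.one_right a).tmul (Commute.one_left b)

theorem cornerSubmodule_tmul_le {e : A} {f : B} (he : IsIdempotentElem e)
    (hf : IsIdempotentElem f) :
    cornerSubmodule k (e ⊗ₜ[k] f) ≤
      mapHom includeLeft (cornerSubmodule k e) * mapHom includeRight (cornerSubmodule k f) := by
  suffices h : ∀ t, e ⊗ₜ[k] f * t * e ⊗ₜ[k] f ∈
      mapHom includeLeft (cornerSubmodule k e) * mapHom includeRight (cornerSubmodule k f) by
    rintro t ⟨ht₁, ht₂⟩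
    simpa [ht₁, ht₂] using h t
  intro t
  induction t using TensorProduct.induction_on with
  | zero => simp
  | add t t' h h' => rw [mul_add, add_mul]; exact add_mem h h'
  | tmul a b =>
    rw [tmul_mul_tmul, tmul_mul_tmul, ← mul_one (e * a * e), ← one_mul (f * b * f),
      ← tmul_mul_tmul]
    refine mul_mem_mul (mem_map_of_mem (f := includeLeft.toLinearMap) ⟨?_, ?_⟩)
      (mem_map_of_mem (f := includeRight.toLinearMap) ⟨?_, ?_⟩)
    · simp only [← mul_assoc, he.eq]
    · rw [mul_assoc, he.eq]
    · simp only [← mul_assoc, hf.eq]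
    · rw [mul_assoc, hf.eq]

theorem mapHom_mul_mapHom_mul_add_le {C N : Submodule k A} {C' N' : Submodule k B}
    (h : C * N ≤ N * C) (h' : C' * N' ≤ N' * C') :
    mapHom includeLeft C * mapHom includeRight C' *
        (mapHom includeLeft N + mapHom includeRight N') ≤
      (mapHom includeLeft N + mapHom includeRight N') *
        (mapHom includeLeft C * mapHom (includeRight : B →ₐ[k] A ⊗[k] B) C') := by
  set X := mapHom (includeLeft : A →ₐ[k] A ⊗[k] B) C
  set Y := mapHom (includeRight : B →ₐ[k] A ⊗[k] B) C'
  set U := mapHom (includeLeft : A →ₐ[k] A ⊗[k] B) N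
  set V := mapHom (includeRight : B →ₐ[k] A ⊗[k] B) N'
  have hXU : X * U ≤ U * X := by simp only [X, U, ← map_mul]; exact map_mono h
  have hYV : Y * V ≤ V * Y := by simp only [Y, V, ← map_mul]; exact map_mono h'
  have hUY : U * Y = Y * U := commute_mapHom_includeLeft_mapHom_includeRight N C'
  have hXV : X * V = V * X := commute_mapHom_includeLeft_mapHom_includeRight C N'
  rw [mul_add, add_mul]
  refine add_le_add ?_ ?_
  · calc X * Y * U = X * U * Y := by rw [mul_assoc, ← hUY, mul_assoc]
      _ ≤ U * X * Y := mul_le_mul_left hXU Y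
      _ = U * (X * Y) := mul_assoc ..
  · calc X * Y * V ≤ X * (V * Y) := by rw [mul_assoc]; exact mul_le_mul_right hYV X
      _ = V * (X * Y) := by rw [← mul_assoc, hXV, mul_assoc]

theorem mapHom_mul_mapHom_le_span_sup {e : A} {f : B} {N : Submodule k A}
    {N' : Submodule k B} (he : IsIdempotentElem e) (hf : IsIdempotentElem f)
    (hN : ∀ x ∈ cornerSubmodule k e, ∃ l : k, x - l • e ∈ N)
    (hN' : ∀ y ∈ cornerSubmodule k f, ∃ l : k, y - l • f ∈ N') :
    mapHom includeLeft (cornerSubmodule k e) * mapHom includeRight (cornerSubmodule k f) ≤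
      span k {e ⊗ₜ[k] f} ⊔ (mapHom includeLeft N + mapHom includeRight N') *
        (mapHom includeLeft (cornerSubmodule k e) *
          mapHom (includeRight : B →ₐ[k] A ⊗[k] B) (cornerSubmodule k f)) := by
  refine mul_le.2 ?_
  rintro _ ⟨x, hx, rfl⟩ _ ⟨y, hy, rfl⟩
  obtain ⟨l, hl⟩ := hN x hx
  obtain ⟨l', hl'⟩ := hN' y hy
  simp only [AlgHom.toLinearMap_apply, includeLeft_apply, includeRight_apply, tmul_mul_tmul,
    mul_one, one_mul]
  have hdecomp : x ⊗ₜ[k] y = (l * l') • e ⊗ₜ[k] f +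
      ((x - l • e) ⊗ₜ[k] (1 : B) * (e ⊗ₜ[k] (1 : B) * (1 : A) ⊗ₜ[k] y) +
        (1 : A) ⊗ₜ[k] (y - l' • f) *
          ((l • e) ⊗ₜ[k] (1 : B) * (1 : A) ⊗ₜ[k] f)) := by
    simp only [tmul_mul_tmul, mul_one, one_mul, sub_mul, smul_mul_assoc, hx.2, he.eq, hy.2,
      hf.eq, tmul_sub, sub_tmul, smul_tmul', tmul_smul, smul_smul, mul_comm l']
    abel
  rw [hdecomp]
  refine add_mem_sup (smul_mem _ _ (mem_span_singleton_self _)) (add_mem ?_ ?_)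
  · exact mul_mem_mul (mem_sup_left (mem_map_of_mem hl))
      (mul_mem_mul (mem_map_of_mem he.mem_cornerSubmodule) (mem_map_of_mem hy))
  · exact mul_mem_mul (mem_sup_right (mem_map_of_mem hl'))
      (mul_mem_mul (mem_map_of_mem (smul_mem _ l he.mem_cornerSubmodule))
        (mem_map_of_mem hf.mem_cornerSubmodule))

theorem IsAbsolutelyPrimitiveIdem.tmul [FiniteDimensional k A] [FiniteDimensional k B]
    {e : A} {f : B} (he : IsAbsolutelyPrimitiveIdem k e) (hf : IsAbsolutelyPrimitiveIdem k f) :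
    IsAbsolutelyPrimitiveIdem k (e ⊗ₜ[k] f) := by
  have he' := he.isPrimitiveIdem
  have hf' := hf.isPrimitiveIdem
  set D := mapHom includeLeft (cornerSubmodule k e) *
    mapHom (includeRight : B →ₐ[k] A ⊗[k] B) (cornerSubmodule k f)
  set P := mapHom includeLeft (he'.nilCorner k) +
    mapHom (includeRight : B →ₐ[k] A ⊗[k] B) (hf'.nilCorner k)
  have hPD : IsNilpotent (P * D) := by
    refine isNilpotent_mul_of_mul_le ?_ (mapHom_mul_mapHom_mul_add_le
      he'.cornerSubmodule_mul_nilCorner_le hf'.cornerSubmodule_mul_nilCorner_le)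
    exact (commute_mapHom_includeLeft_mapHom_includeRight _ _).isNilpotent_add
      (he'.isNilpotent_nilCorner.map _) (hf'.isNilpotent_nilCorner.map _)
  have hD : D ≤ span k {e ⊗ₜ[k] f} ⊔ P * D := by
    refine mapHom_mul_mapHom_le_span_sup he.1 hf.1 (fun x hx => ?_) (fun y hy => ?_)
    · obtain ⟨l, hl⟩ := he.2.2 x hx
      exact ⟨l, sub_mem hx (smul_mem _ l he.1.mem_cornerSubmodule), hl⟩
    · obtain ⟨l, hl⟩ := hf.2.2 y hy
      exact ⟨l, sub_mem hy (smul_mem _ l hf.1.mem_cornerSubmodule), hl⟩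
  refine ⟨by rw [IsIdempotentElem, tmul_mul_tmul, he.1.eq, hf.1.eq],
    tmul_ne_zero he.2.1 hf.2.1, fun t ht => ?_⟩
  obtain ⟨_, hs, j, hj, rfl⟩ := mem_sup.1 (hD (cornerSubmodule_tmul_le he.1 hf.1 ht))
  obtain ⟨l, rfl⟩ := mem_span_singleton.1 hs
  obtain ⟨n, hn⟩ := hPD
  refine ⟨l, n, ?_⟩
  simpa [hn] using pow_mem_pow _ hj n

end TensorProduct

open TensorProduct in
/-- over an algebraically closed field `k`, if `e` and `f` are primitive
idempotents of finite-dimensional `k`-algebras `A` and `B`, then `e ⊗ f` is a primitive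
idempotent of `A ⊗[k] B`. -/
theorem primitive_idem_tensor (k : Type) [Field k] [IsAlgClosed k]
    (A B : Type) [Ring A] [Algebra k A] [FiniteDimensional k A]
    [Ring B] [Algebra k B] [FiniteDimensional k B]
    (e : A) (f : B) (he : IsPrimitiveIdem e) (hf : IsPrimitiveIdem f) :
    IsPrimitiveIdem (e ⊗ₜ[k] f : A ⊗[k] B) :=
  (he.isAbsolutelyPrimitiveIdem.tmul hf.isAbsolutelyPrimitiveIdem).isPrimitiveIdem
end

section
/- Let k be a field, P a finite group, and M a bounded complex of finite-dimensional kP-modules such that the algebra H_0(End_k(M)) of chain self-maps of M modulo homotopy, with its kP-interior structure, is a primitive kP-interior algebra (i.e. its P-fixed subalgebra under conjugation is local). Then the homology of M vanishes in all degrees except one degree q, and there is a kP-interior algebra isomorphism H_0(End_k(M)) ≅ End_k(H_q(M)). -/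
/-!
Over a field every differential `d` has a generalized inverse `s` (`d s d = d`), so
`E = 1 - (d s + s d)` is a chain map homotopic to the identity with `E d = 0` and `E³ = E²`.
Splitting the idempotent `E²` shows that `M` is homotopy equivalent to a complex `K` with zero
differentials. The projections of `K` onto its single degrees are central idempotents of
`H₀(End_k(K)) ≅ H₀(End_k(M))`, hence lie in the local ring of `P`-fixed points and are each `0`
or `1`; they cannot all vanish because that ring is nonzero. So `K` is concentrated in one
degree `q`, `M` is isomorphic to `K_q[q]` in the homotopy category, and `H_q` identifies the
endomorphisms of `K_q[q]` there with `End_k(K_q)`.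
-/

open CategoryTheory CategoryTheory.Limits

noncomputable section

variable (k : Type) [Field k]

/-- The image of a chain complex in the homotopy category; its endomorphism ring is the
algebra `H₀(End_k(M))` of chain self-maps of `M` modulo chain homotopy. -/
abbrev htpyObj (M : HomologicalComplex (ModuleCat k) (ComplexShape.down ℤ)) :
    HomotopyCategory (ModuleCat k) (ComplexShape.down ℤ) :=
  (HomotopyCategory.quotient (ModuleCat k) (ComplexShape.down ℤ)).obj M

/-- The `q`-th homology functor on the homotopy category. -/
abbrev HF (q : ℤ) :
    HomotopyCategory (ModuleCat k) (ComplexShape.down ℤ) ⥤ ModuleCat k :=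
  HomotopyCategory.homologyFunctor (ModuleCat k) (ComplexShape.down ℤ) q

/-- The image in `H₀(End_k(M))` of the interior structural map `ρ : P →* (End M)ˣ`,
`P` acting on the complex `M` by chain automorphisms in each degree. -/
def interiorImage (M : HomologicalComplex (ModuleCat k) (ComplexShape.down ℤ))
    {P : Type} [Group P] (ρ : P →* (CategoryTheory.End M)ˣ) :
    Set (CategoryTheory.End (htpyObj k M)) :=
  Set.range fun g : P =>
    (HomotopyCategory.quotient (ModuleCat k) (ComplexShape.down ℤ)).map
      ((ρ g : CategoryTheory.End M))

theorem LinearMap.exists_comp_comp_eq_self {K V W : Type*} [DivisionRing K] [AddCommGroup V]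
    [Module K V] [AddCommGroup W] [Module K W] (f : V →ₗ[K] W) :
    ∃ g : W →ₗ[K] V, f ∘ₗ g ∘ₗ f = f := by
  obtain ⟨σ, hσ⟩ := (range f).subtype.exists_leftInverse_of_injective (Submodule.ker_subtype _)
  obtain ⟨τ, hτ⟩ := f.rangeRestrict.exists_rightInverse_of_surjective f.range_rangeRestrict
  refine ⟨τ ∘ₗ σ, ?_⟩
  calc f ∘ₗ (τ ∘ₗ σ) ∘ₗ f
      = (range f).subtype ∘ₗ (f.rangeRestrict ∘ₗ τ) ∘ₗ (σ ∘ₗ (range f).subtype) ∘ₗ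
          f.rangeRestrict := rfl
    _ = f := by rw [hσ, hτ]; rfl

theorem ModuleCat.exists_comp_comp_eq_self {K : Type*} [DivisionRing K] {V W : ModuleCat K}
    (f : V ⟶ W) : ∃ g : W ⟶ V, f ≫ g ≫ f = f := by
  obtain ⟨g, hg⟩ := f.hom.exists_comp_comp_eq_self
  exact ⟨ModuleCat.ofHom g, ModuleCat.hom_ext hg⟩

theorem Subring.eq_zero_or_eq_one_of_isLocalRing_centralizer {R : Type*} [Ring R] {s : Set R}
    [IsLocalRing (Subring.centralizer s)] {e : R} (he : IsIdempotentElem e)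
    (hcomm : ∀ r, r * e = e * r) : e = 0 ∨ e = 1 := by
  let e' : Subring.centralizer s := ⟨e, mem_centralizer_iff.mpr fun r _ => hcomm r⟩
  have he' : e' * (1 - e') = 0 := Subtype.ext (by simp [e', mul_sub, he.eq])
  rcases IsLocalRing.isUnit_or_isUnit_of_add_one (add_sub_cancel e' 1) with hu | hu
  · exact .inr (congrArg Subtype.val (sub_eq_zero.mp (hu.mul_right_eq_zero.mp he')).symm)
  · exact .inl (congrArg Subtype.val (hu.mul_left_eq_zero.mp he'))

theorem Subring.one_ne_zero_of_isLocalRing_centralizer {R : Type*} [Ring R] {s : Set R}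
    [IsLocalRing (Subring.centralizer s)] : (1 : R) ≠ 0 :=
  fun h => one_ne_zero (Subtype.ext h : (1 : Subring.centralizer s) = 0)

theorem CategoryTheory.Functor.map_bijective_iff_of_iso {C D : Type*} [Category C] [Category D]
    (F : C ⥤ D) {X Y : C} (e : X ≅ Y) :
    Function.Bijective (fun f : X ⟶ X => F.map f) ↔
      Function.Bijective (fun f : Y ⟶ Y => F.map f) := by
  have h : (fun f : Y ⟶ Y => F.map f) ∘ e.homCongr e =
      (F.mapIso e).homCongr (F.mapIso e) ∘ fun f : X ⟶ X => F.map f :=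
    funext (F.map_homCongr e e)
  rw [← Function.Bijective.of_comp_iff _ (e.homCongr e).bijective, h,
    Function.Bijective.of_comp_iff' (Equiv.bijective _)]

namespace HomologicalComplex

variable {C : Type*} [Category C] [Preadditive C] {ι : Type*} {c : ComplexShape ι}

theorem exists_homotopy_id_comp_d_eq_zero {M : HomologicalComplex C c}
    (hM : ∀ i j, ∃ s, M.d i j ≫ s ≫ M.d i j = M.d i j) :
    ∃ E : M ⟶ M, Nonempty (Homotopy E (𝟙 M)) ∧ (∀ i j, E.f i ≫ M.d i j = 0) ∧
      E ≫ E ≫ E = E ≫ E := by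
  -- `Homotopy.nullHomotopy` needs the components off the shape to vanish
  have hM' : ∀ i j, ∃ s, M.d j i ≫ s ≫ M.d j i = M.d j i ∧ (¬c.Rel j i → s = 0) := by
    intro i j
    by_cases hji : c.Rel j i
    · obtain ⟨s, hs⟩ := hM j i
      exact ⟨s, hs, absurd hji⟩
    · exact ⟨0, by rw [M.shape _ _ hji, zero_comp], fun _ => rfl⟩
  choose s hs hs0 using hM'
  set E := 𝟙 M - Homotopy.nullHomotopicMap s
  have hE : ∀ i, E.f i = 𝟙 _ - (dNext i s + prevD i s) := fun i => rfl
  have hEd : ∀ i j, E.f i ≫ M.d i j = 0 := by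
    intro i j
    by_cases hij : c.Rel i j
    · rw [hE, dNext_eq s hij, prevD_eq_toPrev_dTo]
      simp [Preadditive.sub_comp, hs j i]
    · rw [M.shape _ _ hij, comp_zero]
  have hdE : ∀ i j, M.d i j ≫ E.f j = 0 := by
    intro i j
    by_cases hij : c.Rel i j
    · rw [hE, prevD_eq s hij, dNext_eq_dFrom_fromNext]
      simp [Preadditive.comp_sub, hs j i]
    · rw [M.shape _ _ hij, zero_comp]
  refine ⟨E, ⟨(Homotopy.equivSubZero.symm ((Homotopy.ofEq (sub_sub_cancel _ _)).trans
    (Homotopy.nullHomotopy s hs0))).symm⟩, hEd, ?_⟩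
  ext i
  have hsq : E.f i ≫ E.f i = E.f i - dNext i s ≫ E.f i :=
    calc E.f i ≫ E.f i = (𝟙 _ - (dNext i s + prevD i s)) ≫ E.f i := by rw [← hE]
      _ = E.f i - dNext i s ≫ E.f i := by
        rw [Preadditive.sub_comp, Preadditive.add_comp, Category.id_comp, prevD_eq_toPrev_dTo,
          Category.assoc, dTo, hdE, comp_zero, add_zero]
  have hEs : E.f i ≫ dNext i s = 0 := by
    rw [dNext_eq_dFrom_fromNext, dFrom, ← Category.assoc, hEd, zero_comp]
  calc (E ≫ E ≫ E).f i = E.f i ≫ (E.f i - dNext i s ≫ E.f i) := by rw [comp_f, comp_f, hsq]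
    _ = (E ≫ E).f i := by
      rw [Preadditive.comp_sub, ← Category.assoc, hEs, zero_comp, sub_zero, comp_f]

theorem exists_homotopyEquiv_d_eq_zero [IsIdempotentComplete C] (M : HomologicalComplex C c)
    (hM : ∀ i j, ∃ s, M.d i j ≫ s ≫ M.d i j = M.d i j) :
    ∃ N : HomologicalComplex C c, (∀ i j, N.d i j = 0) ∧ Nonempty (HomotopyEquiv M N) := by
  obtain ⟨E, ⟨hE⟩, hEd, hcube⟩ := exists_homotopy_id_comp_d_eq_zero hM
  obtain ⟨N, i, p, hip, hpi⟩ :=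
    IsIdempotentComplete.idempotents_split M (E ≫ E) (by simp only [Category.assoc, hcube])
  refine ⟨N, fun n m => ?_, ⟨⟨p, i, ?_, Homotopy.ofEq hip⟩⟩⟩
  · have hi : i.f n ≫ E.f n ≫ E.f n = i.f n := by
      rw [← comp_f, ← hpi, comp_f, ← Category.assoc, ← comp_f, hip, id_f, Category.id_comp]
    calc N.d n m = (i ≫ p).f n ≫ N.d n m := by rw [hip, id_f, Category.id_comp]
      _ = i.f n ≫ M.d n m ≫ p.f m := by rw [comp_f, Category.assoc, p.comm]
      _ = (i.f n ≫ E.f n ≫ E.f n) ≫ M.d n m ≫ p.f m := by rw [hi]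
      _ = 0 := by simp only [Category.assoc, reassoc_of% hEd n m, zero_comp, comp_zero]
  · exact (Homotopy.ofEq hpi).trans ((hE.comp hE).trans (Homotopy.ofEq (Category.id_comp _)))

section

variable [DecidableEq ι]

@[simps]
def degreeProj (K : HomologicalComplex C c) (hK : ∀ i j, K.d i j = 0) (q : ι) : K ⟶ K where
  f i := if i = q then 𝟙 _ else 0
  comm' i j _ := by rw [hK, zero_comp, comp_zero]

variable {K : HomologicalComplex C c} (hK : ∀ i j, K.d i j = 0)

theorem comp_degreeProj (g : K ⟶ K) (q : ι) : g ≫ degreeProj K hK q = degreeProj K hK q ≫ g := by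
  ext i
  by_cases h : i = q <;> simp [h]

theorem degreeProj_comp_self (q : ι) :
    degreeProj K hK q ≫ degreeProj K hK q = degreeProj K hK q := by
  ext i
  by_cases h : i = q <;> simp [h]

def isoSingle [HasZeroObject C] {q : ι} (hq : ∀ i, i ≠ q → IsZero (K.X i)) :
    K ≅ (single C c q).obj (K.X q) where
  hom := mkHomToSingle (𝟙 _) fun i _ => by rw [hK, zero_comp]
  inv := mkHomFromSingle (𝟙 _) fun i _ => by rw [hK, comp_zero]
  hom_inv_id := by
    ext i
    by_cases h : i = q
    · subst h; simp
    · exact (hq i h).eq_of_src _ _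

end

end HomologicalComplex

namespace HomotopyCategory

open HomologicalComplex

section

variable {C : Type*} [Category C] [Preadditive C] {ι : Type*} {c : ComplexShape ι}

theorem quotient_map_injective_of_d_eq_zero {K L : HomologicalComplex C c}
    (hK : ∀ i j, K.d i j = 0) (hL : ∀ i j, L.d i j = 0) :
    Function.Injective ((quotient C c).map : (K ⟶ L) → _) := by
  intro f g h
  ext i
  simpa [hK, hL] using (homotopyOfEq f g h).comm i

variable [DecidableEq ι]

theorem degreeProj_eq_zero_or_eq_id {K : HomologicalComplex C c} (hK : ∀ i j, K.d i j = 0)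
    {X : HomotopyCategory C c} (e : X ≅ (quotient C c).obj K) (s : Set (End X))
    [IsLocalRing (Subring.centralizer s)] (q : ι) :
    degreeProj K hK q = 0 ∨ degreeProj K hK q = 𝟙 K := by
  set p := degreeProj K hK q
  let ε : End X := e.hom ≫ (quotient C c).map p ≫ e.inv
  have hidem : IsIdempotentElem ε := by
    simp only [IsIdempotentElem, End.mul_def, ε, Category.assoc, Iso.inv_hom_id_assoc,
      ← Functor.map_comp_assoc, p, degreeProj_comp_self]
  have hcomm : ∀ r : End X, r * ε = ε * r := by
    intro r
    obtain ⟨g, hg⟩ := (quotient C c).map_surjective (e.inv ≫ r ≫ e.hom)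
    obtain rfl : r = e.hom ≫ (quotient C c).map g ≫ e.inv := by simp [hg]
    simp only [End.mul_def, ε, Category.assoc, Iso.inv_hom_id_assoc, ← Functor.map_comp_assoc, p,
      comp_degreeProj]
  have hinj := quotient_map_injective_of_d_eq_zero hK hK
  rcases Subring.eq_zero_or_eq_one_of_isLocalRing_centralizer (s := s) hidem hcomm with h | h
  · refine .inl (hinj ?_)
    simpa [ε] using congrArg (fun f => e.inv ≫ f ≫ e.hom) h
  · refine .inr (hinj ?_)
    simpa [ε, End.one_def] using congrArg (fun f => e.inv ≫ f ≫ e.hom) h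

theorem exists_isZero_X_of_isLocalRing_centralizer {K : HomologicalComplex C c}
    (hK : ∀ i j, K.d i j = 0) {X : HomotopyCategory C c} (e : X ≅ (quotient C c).obj K)
    (s : Set (End X)) [IsLocalRing (Subring.centralizer s)] :
    ∃ q, ∀ i, i ≠ q → IsZero (K.X i) := by
  by_cases h : ∃ q, degreeProj K hK q = 𝟙 K
  · obtain ⟨q, hq⟩ := h
    refine ⟨q, fun i hi => (IsZero.iff_id_eq_zero _).mpr ?_⟩
    simpa [hi] using congrArg (fun f => f.f i) hq.symm
  · simp only [not_exists] at h
    have hK0 : 𝟙 K = 0 := by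
      ext i
      have hi := (degreeProj_eq_zero_or_eq_id hK e s i).resolve_right (h i)
      simpa using congrArg (fun f => f.f i) hi
    exfalso
    apply Subring.one_ne_zero_of_isLocalRing_centralizer (s := s)
    calc (1 : End X) = e.hom ≫ (quotient C c).map (𝟙 K) ≫ e.inv := by simp [End.one_def]
      _ = 0 := by simp [hK0]

end

variable {C : Type*} [Category C] [Preadditive C] [HasZeroObject C] [CategoryWithHomology C]
  {ι : Type*} [DecidableEq ι] {c : ComplexShape ι} {X : HomotopyCategory C c} {q : ι} {A : C}

theorem isZero_homology_of_iso_single (e : X ≅ (quotient C c).obj ((single C c q).obj A))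
    {j : ι} (hj : j ≠ q) : IsZero ((homologyFunctor C c j).obj X) :=
  (isZero_single_obj_homology c q A j hj).of_iso
    ((homologyFunctor C c j).mapIso e ≪≫ (homologyFunctorFactors C c j).app _)

theorem homologyFunctor_map_bijective_of_iso_single
    (e : X ≅ (quotient C c).obj ((single C c q).obj A)) :
    Function.Bijective fun f : X ⟶ X => (homologyFunctor C c q).map f := by
  rw [(homologyFunctor C c q).map_bijective_iff_of_iso e]
  have hsingle : (single C c q ⋙ quotient C c ⋙ homologyFunctor C c q).FullyFaithful :=
    (Functor.FullyFaithful.id C).ofIso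
      ((homologyFunctorSingleIso C c q).symm ≪≫
        Functor.isoWhiskerLeft _ (homologyFunctorFactors C c q).symm)
  have hquot : Function.Bijective fun f : A ⟶ A => (quotient C c).map ((single C c q).map f) :=
    ⟨(quotient_map_injective_of_d_eq_zero (by simp) (by simp)).comp (single C c q).map_injective,
      (quotient C c).map_surjective.comp (single C c q).map_surjective⟩
  exact (Function.Bijective.of_comp_iff _ hquot).mp (hsingle.map_bijective A A)

end HomotopyCategory

theorem primitive_implies_homology_concentrated
    (M : HomologicalComplex (ModuleCat k) (ComplexShape.down ℤ))
    (P : Type) [Group P] (ρ : P →* (CategoryTheory.End M)ˣ)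
    (hprim : IsLocalRing ↥(Subring.centralizer (interiorImage k M ρ))) :
    ∃ q : ℤ, (∀ j : ℤ, j ≠ q → IsZero ((HF k j).obj (htpyObj k M))) ∧
      (∀ f g : CategoryTheory.End (htpyObj k M),
        (HF k q).map (f ≫ g) = (HF k q).map f ≫ (HF k q).map g) ∧
      Function.Bijective
        (fun f : CategoryTheory.End (htpyObj k M) => (HF k q).map f) := by
  obtain ⟨K, hK, ⟨φ⟩⟩ := HomologicalComplex.exists_homotopyEquiv_d_eq_zero M
    fun i j => ModuleCat.exists_comp_comp_eq_self (M.d i j)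
  let e : htpyObj k M ≅ _ := HomotopyCategory.isoOfHomotopyEquiv φ
  obtain ⟨q, hq⟩ := HomotopyCategory.exists_isZero_X_of_isLocalRing_centralizer hK e
    (interiorImage k M ρ)
  let e' := e ≪≫ (HomotopyCategory.quotient _ _).mapIso (HomologicalComplex.isoSingle hK hq)
  exact ⟨q, fun j hj => HomotopyCategory.isZero_homology_of_iso_single e' hj,
    fun f g => (HF k q).map_comp f g,
    HomotopyCategory.homologyFunctor_map_bijective_of_iso_single e'⟩

end
end
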